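/- Let r : [0,∞) → ℍ² be a geodesic ray and let 𝓢 be a locally finite family of disjoint closed convex subsets of ℍ². If the length of r in the electric metric obtained by electrocuting the members of 𝓢 is infinite, then for every T > 0 there exists t > T such that r(t) lies outside every member of 𝓢, and r meets infinitely many distinct members of 𝓢 or spends infinite time outside ∪𝓢. -/

import Mathlib

open Set Filter MeasureTheory

/-- A subset of the hyperbolic plane is (geodesically) convex if it contains every
geodesic segment between its points. -/
def HypConvex (S : Set UpperHalfPlane) : Prop :=
  ∀ (γ : ℝ → UpperHalfPlane) (L : ℝ), 0 ≤ L →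
    (∀ s ∈ Icc (0 : ℝ) L, ∀ t ∈ Icc (0 : ℝ) L, dist (γ s) (γ t) = |s - t|) →
    γ 0 ∈ S → γ L ∈ S → ∀ u ∈ Icc (0 : ℝ) L, γ u ∈ S

/-- if a geodesic ray `r` in `ℍ²` has infinite electric length with
respect to a locally finite family `𝓢` of disjoint closed convex sets (time spent
outside `⋃𝓢` plus number of members met, each counted at most `1`, is unbounded),
then `r` leaves all members of `𝓢` at arbitrarily large times, and it either meets
infinitely many distinct members of `𝓢` or spends infinite time outside `⋃𝓢`. -/
theorem infinite_electric_length_dichotomy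
    (r : ℝ → UpperHalfPlane)
    (hr : ∀ s t : ℝ, 0 ≤ s → 0 ≤ t → dist (r s) (r t) = |s - t|)
    (𝓢 : Set (Set UpperHalfPlane))
    (hclosed : ∀ S ∈ 𝓢, IsClosed S)
    (hconv : ∀ S ∈ 𝓢, HypConvex S)
    (hdisj : ∀ S ∈ 𝓢, ∀ S' ∈ 𝓢, S ≠ S' → S ∩ S' = ∅)
    (hlf : ∀ K : Set UpperHalfPlane, IsCompact K → {S ∈ 𝓢 | (S ∩ K).Nonempty}.Finite)
    (hIEL : ∀ L : ℝ, ∃ T : ℝ, 0 < T ∧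
      L ≤ (volume {t ∈ Icc (0 : ℝ) T | r t ∉ ⋃₀ 𝓢}).toReal +
        ({S ∈ 𝓢 | ∃ t ∈ Icc (0 : ℝ) T, r t ∈ S}).ncard) :
    (∀ T : ℝ, 0 < T → ∃ t : ℝ, T < t ∧ ∀ S ∈ 𝓢, r t ∉ S) ∧
    ({S ∈ 𝓢 | ∃ t : ℝ, 0 ≤ t ∧ r t ∈ S}.Infinite ∨
      volume {t : ℝ | 0 ≤ t ∧ r t ∉ ⋃₀ 𝓢} = ⊤) := by
  have hcont : ContinuousOn r (Ici 0) := by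
    have hlip : LipschitzOnWith 1 r (Ici 0) := by
      intro s hs t ht
      rw [edist_dist, edist_dist, hr s t hs ht]
      simp [Real.dist_eq]
    exact hlip.continuousOn
  constructor
  · by_contra hcon
    push_neg at hcon
    obtain ⟨T, hT, hmem⟩ := hcon
    have ht0T : T < T + 1 := by linarith
    have ht0pos : 0 < T + 1 := by linarith
    set t0 : ℝ := T + 1 with ht0def
    obtain ⟨S0, hS0𝓢, hrt0⟩ := hmem t0 ht0T
    by_cases hall : ∀ t, t0 ≤ t → r t ∈ S0
    · -- the ray eventually stays in S0 : contradicts infinite electric length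
      have hK : IsCompact (r '' Icc 0 t0) :=
        isCompact_Icc.image_of_continuousOn (hcont.mono (fun x hx => hx.1))
      have hF0fin : {S ∈ 𝓢 | (S ∩ r '' Icc 0 t0).Nonempty}.Finite := hlf _ hK
      have hfin : (insert S0 {S ∈ 𝓢 | (S ∩ r '' Icc 0 t0).Nonempty}).Finite :=
        hF0fin.insert S0
      obtain ⟨T', hT'pos, hle⟩ :=
        hIEL (t0 + (insert S0 {S ∈ 𝓢 | (S ∩ r '' Icc 0 t0).Nonempty}).ncard + 1)
      have hsub1 : {t ∈ Icc (0 : ℝ) T' | r t ∉ ⋃₀ 𝓢} ⊆ Icc 0 t0 := by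
        rintro t ⟨⟨ht1, -⟩, hout⟩
        refine ⟨ht1, ?_⟩
        by_contra h
        exact hout ⟨S0, hS0𝓢, hall t (le_of_lt (not_le.mp h))⟩
      have hvolIcc : volume (Icc (0 : ℝ) t0) = ENNReal.ofReal t0 := by
        rw [Real.volume_Icc, sub_zero]
      have hvol : (volume {t ∈ Icc (0 : ℝ) T' | r t ∉ ⋃₀ 𝓢}).toReal ≤ t0 := by
        have h1 := measure_mono (μ := volume) hsub1
        calc (volume {t ∈ Icc (0 : ℝ) T' | r t ∉ ⋃₀ 𝓢}).toReal
            ≤ (volume (Icc (0 : ℝ) t0)).toReal :=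
              ENNReal.toReal_mono (by simp [hvolIcc]) h1
          _ = t0 := by rw [hvolIcc, ENNReal.toReal_ofReal ht0pos.le]
      have hsub2 : {S ∈ 𝓢 | ∃ t ∈ Icc (0 : ℝ) T', r t ∈ S} ⊆
          insert S0 {S ∈ 𝓢 | (S ∩ r '' Icc 0 t0).Nonempty} := by
        rintro S ⟨hS, t, ⟨ht1, ht2⟩, hrt⟩
        by_cases hle' : t ≤ t0
        · exact Set.mem_insert_of_mem _ ⟨hS, r t, hrt, Set.mem_image_of_mem r ⟨ht1, hle'⟩⟩
        · have hSeq : S = S0 := by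
            by_contra hne
            have hd := hdisj S hS S0 hS0𝓢 hne
            have : r t ∈ S ∩ S0 :=
              ⟨hrt, hall t (le_of_lt (not_le.mp hle'))⟩
            rw [hd] at this
            exact this
          rw [hSeq]; exact Set.mem_insert _ _
      have hcard : ({S ∈ 𝓢 | ∃ t ∈ Icc (0 : ℝ) T', r t ∈ S}).ncard ≤
          (insert S0 {S ∈ 𝓢 | (S ∩ r '' Icc 0 t0).Nonempty}).ncard :=
        Set.ncard_le_ncard hsub2 hfin
      have hcard' : (({S ∈ 𝓢 | ∃ t ∈ Icc (0 : ℝ) T', r t ∈ S}).ncard : ℝ) ≤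
          ((insert S0 {S ∈ 𝓢 | (S ∩ r '' Icc 0 t0).Nonempty}).ncard : ℝ) :=
        Nat.cast_le.mpr hcard
      linarith
    · -- the ray leaves S0 at some time t1 ≥ t0 : topological contradiction
      push_neg at hall
      obtain ⟨t1, ht1, hrt1⟩ := hall
      have hcont' : ContinuousOn r (Icc t0 t1) :=
        hcont.mono (fun x hx => le_trans ht0pos.le hx.1)
      have hK : IsCompact (r '' Icc t0 t1) := isCompact_Icc.image_of_continuousOn hcont'
      have hFfin : {S ∈ 𝓢 | (S ∩ r '' Icc t0 t1).Nonempty}.Finite := hlf _ hK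
      set F : Set (Set UpperHalfPlane) := {S ∈ 𝓢 | (S ∩ r '' Icc t0 t1).Nonempty}
        with hFdef
      set A : Set ℝ := Icc t0 t1 ∩ r ⁻¹' S0 with hAdef
      set B : Set ℝ := ⋃ S ∈ F \ {S0}, Icc t0 t1 ∩ r ⁻¹' S with hBdef
      have hclosedS : ∀ S ∈ 𝓢, IsClosed (Icc t0 t1 ∩ r ⁻¹' S) := fun S hS =>
        hcont'.preimage_isClosed_of_isClosed isClosed_Icc (hclosed S hS)
      have hAclosed : IsClosed A := hclosedS S0 hS0𝓢
      have hBclosed : IsClosed B := by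
        apply Set.Finite.isClosed_biUnion (hFfin.diff : (F \ {S0}).Finite)
        exact fun S hS => hclosedS S hS.1.1
      have hABdisj : ∀ x, x ∈ A → x ∉ B := by
        rintro x ⟨hxI, hxS0⟩ hxB
        rw [hBdef, Set.mem_iUnion₂] at hxB
        obtain ⟨S, hSF, hxIcc, hxS⟩ := hxB
        have hne : S ≠ S0 := fun h => hSF.2 (by simp [h])
        have hd := hdisj S hSF.1.1 S0 hS0𝓢 hne
        have : r x ∈ S ∩ S0 := ⟨hxS, hxS0⟩
        rw [hd] at this
        exact this
      have hcover : Icc t0 t1 ⊆ A ∪ B := by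
        intro x hx
        obtain ⟨S, hS𝓢, hxS⟩ := hmem x (lt_of_lt_of_le ht0T hx.1)
        by_cases hSS0 : S = S0
        · exact Or.inl ⟨hx, hSS0 ▸ hxS⟩
        · refine Or.inr (Set.mem_biUnion ?_ ⟨hx, hxS⟩)
          exact ⟨⟨hS𝓢, r x, hxS, Set.mem_image_of_mem r hx⟩, by simp [hSS0]⟩
      have hpre : IsPreconnected (Icc t0 t1) := isPreconnected_Icc
      have hne1 : (Icc t0 t1 ∩ Bᶜ).Nonempty := by
        refine ⟨t0, ⟨le_refl t0, ht1⟩, fun hB => ?_⟩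
        exact hABdisj t0 ⟨⟨le_refl t0, ht1⟩, hrt0⟩ hB
      have hne2 : (Icc t0 t1 ∩ Aᶜ).Nonempty :=
        ⟨t1, ⟨ht1, le_refl t1⟩, fun hA => hrt1 hA.2⟩
      have hsub : Icc t0 t1 ⊆ Bᶜ ∪ Aᶜ := by
        intro x hx
        rcases hcover hx with hA | hB
        · exact Or.inl (hABdisj x hA)
        · exact Or.inr (fun hA => hABdisj x hA hB)
      obtain ⟨x, hxI, hxB, hxA⟩ :=
        hpre Bᶜ Aᶜ hBclosed.isOpen_compl hAclosed.isOpen_compl hsub hne1 hne2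
      rcases hcover hxI with hA | hB
      · exact hxA hA
      · exact hxB hB
  · by_contra hcon
    push_neg at hcon
    obtain ⟨hfin, hvol⟩ := hcon
    obtain ⟨T, hTpos, hle⟩ := hIEL ((volume {t : ℝ | 0 ≤ t ∧ r t ∉ ⋃₀ 𝓢}).toReal +
      ({S ∈ 𝓢 | ∃ t : ℝ, 0 ≤ t ∧ r t ∈ S}).ncard + 1)
    have hsub1 : {t ∈ Icc (0 : ℝ) T | r t ∉ ⋃₀ 𝓢} ⊆ {t : ℝ | 0 ≤ t ∧ r t ∉ ⋃₀ 𝓢} :=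
      fun t ht => ⟨ht.1.1, ht.2⟩
    have h1 : (volume {t ∈ Icc (0 : ℝ) T | r t ∉ ⋃₀ 𝓢}).toReal ≤
        (volume {t : ℝ | 0 ≤ t ∧ r t ∉ ⋃₀ 𝓢}).toReal :=
      ENNReal.toReal_mono hvol (measure_mono hsub1)
    have hsub2 : {S ∈ 𝓢 | ∃ t ∈ Icc (0 : ℝ) T, r t ∈ S} ⊆
        {S ∈ 𝓢 | ∃ t : ℝ, 0 ≤ t ∧ r t ∈ S} := by
      rintro S ⟨hS𝓢, t, ht, hrt⟩
      exact ⟨hS𝓢, t, ht.1, hrt⟩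
    have h2 : ({S ∈ 𝓢 | ∃ t ∈ Icc (0 : ℝ) T, r t ∈ S}).ncard ≤
        ({S ∈ 𝓢 | ∃ t : ℝ, 0 ≤ t ∧ r t ∈ S}).ncard :=
      Set.ncard_le_ncard hsub2 hfin
    have h2' : (({S ∈ 𝓢 | ∃ t ∈ Icc (0 : ℝ) T, r t ∈ S}).ncard : ℝ) ≤
        (({S ∈ 𝓢 | ∃ t : ℝ, 0 ≤ t ∧ r t ∈ S}).ncard : ℝ) := Nat.cast_le.mpr h2
    linarith
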